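/- Let Λ < 0. Define a(t) = cos(√|Λ|·t) and b(t) = 1/√|Λ| on the interval I = (−π/(2√|Λ|), π/(2√|Λ|)). Then a and b are positive and twice differentiable on I and satisfy the orthogonal vacuum system with parameters Λ and ε = −1, i.e. for all t ∈ I: b''(t) = −b'(t)²/b(t) − |Λ|·b(t) − ε/b(t) − a'(t)·b'(t)/a(t), a''(t) = −|Λ|·a(t) − 2·a'(t)·b'(t)/b(t), and 0 = |Λ| + ε/b(t)² + b'(t)²/b(t)² + 2·b'(t)·a'(t)/(b(t)·a(t)). -/

import Mathlib

open Real Set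

/-! `a = cos (√|Λ| t)` solves the harmonic equation `a'' = -|Λ| a`, and the constant
`b = 1/√|Λ|` has `b' = b'' = 0`, so every term containing `b'` drops out. What remains of
the `b''` equation and of the constraint is `|Λ| b² = 1 = -ε`, the defining property of `b`.
Positivity of `a` on `I` is positivity of the cosine on `(-π/2, π/2)`. -/

theorem hasDerivAt_cos_mul (c t : ℝ) :
    HasDerivAt (fun t => cos (c * t)) (-c * sin (c * t)) t := by
  simpa [mul_comm] using ((hasDerivAt_id' t).const_mul c).cos

theorem hasDerivAt_neg_mul_sin_mul (c t : ℝ) :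
    HasDerivAt (fun t => -c * sin (c * t)) (-c ^ 2 * cos (c * t)) t :=
  (((hasDerivAt_id' t).const_mul c).sin.const_mul (-c)).congr_deriv (by ring)

theorem deriv_cos_mul (c : ℝ) :
    deriv (fun t => cos (c * t)) = fun t => -c * sin (c * t) :=
  funext fun t => (hasDerivAt_cos_mul c t).deriv

theorem cos_mul_pos_of_mem_Ioo {c t : ℝ} (hc : 0 < c)
    (ht : t ∈ Ioo (-(π / (2 * c))) (π / (2 * c))) : 0 < cos (c * t) := by
  apply cos_pos_of_mem_Ioo
  have hpi : c * (π / (2 * c)) = π / 2 := by field_simp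
  constructor <;> nlinarith [ht.1, ht.2]

theorem pancake_solves_vacuum_system (Λ : ℝ) (hΛ : Λ < 0) (ε : ℝ) (hε : ε = -1)
    (a b : ℝ → ℝ)
    (ha : a = fun t => Real.cos (Real.sqrt |Λ| * t))
    (hb : b = fun _ => 1 / Real.sqrt |Λ|) :
    ∀ t ∈ Set.Ioo (-(π / (2 * Real.sqrt |Λ|))) (π / (2 * Real.sqrt |Λ|)),
      0 < a t ∧ 0 < b t ∧
      DifferentiableAt ℝ a t ∧ DifferentiableAt ℝ (deriv a) t ∧
      DifferentiableAt ℝ b t ∧ DifferentiableAt ℝ (deriv b) t ∧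
      deriv (deriv b) t
        = -(deriv b t) ^ 2 / b t - |Λ| * b t - ε / b t - deriv a t * deriv b t / a t ∧
      deriv (deriv a) t = -|Λ| * a t - 2 * deriv a t * deriv b t / b t ∧
      (0 : ℝ) = |Λ| + ε / (b t) ^ 2 + (deriv b t) ^ 2 / (b t) ^ 2
          + 2 * deriv b t * deriv a t / (b t * a t) := by
  intro t ht
  subst ha hb hε
  set s := √|Λ|
  have hs : 0 < s := sqrt_pos.mpr (abs_pos.mpr hΛ.ne)
  have hss : s ^ 2 = |Λ| := sq_sqrt (abs_nonneg Λ)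
  simp only [deriv_cos_mul, deriv_const']
  refine ⟨cos_mul_pos_of_mem_Ioo hs ht, by positivity, (hasDerivAt_cos_mul s t).differentiableAt,
    (hasDerivAt_neg_mul_sin_mul s t).differentiableAt, differentiableAt_const _,
    differentiableAt_const _, ?_, ?_, ?_⟩
  · field_simp
    linear_combination -hss
  · rw [(hasDerivAt_neg_mul_sin_mul s t).deriv, ← hss]
    ring
  · field_simp
    linear_combination hss
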